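/- Let m ≥ 1 and let X, Y ⊆ ℤ_{≥0}^m. Then Vert(X) = Vert(Y) if and only if N(X) = N(Y). -/

import Mathlib

/-! The extreme points of `N(X)` are exactly the points `emb x` with `x ∈ Vert(X)`, so `N(X)`
determines `Vert(X)`. An extreme point `p` of `N(X) = conv(X) + ℝ≥0^m` lies in `X` itself, since
otherwise it is the midpoint of `p - u` and `p + u` for some nonzero `u ∈ ℕ^m`. Conversely, write
`N(X) = conv(insert x A) + ℝ≥0^m` with `A = X \ {x}`: a point of `conv(insert x A)` below `x`, or a
nontrivial splitting of `x` inside that hull, would put `x` into `conv(A) + ℝ≥0^m = N(A)`.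
Finally, by Dickson's lemma `N(X) = N(F)` for some finite `F`, and an inclusion-minimal such `F`
consists of vertices only, whence `N(Vert X) = N(X)`. -/

open Pointwise

noncomputable section

/-- The embedding of `ℤ_{≥0}^m` into `ℝ^m`. -/
def emb {m : ℕ} (x : Fin m → ℕ) : Fin m → ℝ := fun i => (x i : ℝ)

/-- The Newton polygon of `X ⊆ ℤ_{≥0}^m`: the convex hull (in `ℝ^m`) of
`X + ℤ_{≥0}^m`. -/
def newton {m : ℕ} (X : Set (Fin m → ℕ)) : Set (Fin m → ℝ) :=
  convexHull ℝ (emb '' (X + (Set.univ : Set (Fin m → ℕ))))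

/-- The vertex set of `X`: the elements `x ∈ X` with `x ∉ N(X \ {x})`. -/
def vert {m : ℕ} (X : Set (Fin m → ℕ)) : Set (Fin m → ℕ) :=
  {x ∈ X | emb x ∉ newton (X \ {x})}

open Set

section ConvexGeometry

variable {E : Type*} [AddCommGroup E] [Module ℝ E]

theorem eq_zero_of_sub_mem_of_add_mem_of_mem_extremePoints {S : Set E} {p v : E}
    (hp : p ∈ S.extremePoints ℝ) (hsub : p - v ∈ S) (hadd : p + v ∈ S) : v = 0 := by
  have hmid : p ∈ openSegment ℝ (p - v) (p + v) :=
    ⟨1 / 2, 1 / 2, by norm_num, by norm_num, by norm_num, by module⟩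
  simpa using hp.2 hsub hadd hmid

theorem eq_or_exists_eq_add_smul_sub_of_mem_convexHull_insert {A : Set E} {p c : E}
    (hc : c ∈ convexHull ℝ (insert p A)) :
    c = p ∨ ∃ q ∈ convexHull ℝ A, ∃ θ ∈ Icc (0 : ℝ) 1, c = p + θ • (q - p) := by
  rcases A.eq_empty_or_nonempty with rfl | hA
  · simpa using hc
  · rw [convexHull_insert hA, convexJoin_singleton_left] at hc
    obtain ⟨q, hq, hcq⟩ := mem_iUnion₂.1 hc
    rw [segment_eq_image'] at hcq
    obtain ⟨θ, hθ, rfl⟩ := hcq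
    exact Or.inr ⟨q, hq, θ, hθ, rfl⟩

theorem mem_extremePoints_convexHull_insert {A : Set E} {p : E} (hp : p ∉ convexHull ℝ A) :
    p ∈ (convexHull ℝ (insert p A)).extremePoints ℝ := by
  refine mem_extremePoints_iff_left.2 ⟨subset_convexHull ℝ _ (mem_insert p A), ?_⟩
  rintro a ha b hb ⟨s, t, hs, ht, hst, hab⟩
  rcases eq_or_exists_eq_add_smul_sub_of_mem_convexHull_insert ha with rfl | ⟨q₁, hq₁, α, hα, rfl⟩
  · rfl
  obtain ⟨q₂, hq₂, β, hβ, rfl⟩ : ∃ q₂ ∈ convexHull ℝ A, ∃ β ∈ Icc (0 : ℝ) 1,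
      b = p + β • (q₂ - p) := by
    rcases eq_or_exists_eq_add_smul_sub_of_mem_convexHull_insert hb with rfl | h
    · exact ⟨q₁, hq₁, 0, ⟨le_rfl, zero_le_one⟩, by simp⟩
    · exact h
  have hsα : 0 ≤ s * α := mul_nonneg hs.le hα.1
  have htβ : 0 ≤ t * β := mul_nonneg ht.le hβ.1
  have hcombo : (s * α + t * β) • p = (s * α) • q₁ + (t * β) • q₂ := by
    linear_combination (norm := module) hst • p - hab
  -- Unless `s * α + t * β = 0`, this exhibits `p` as a convex combination of `q₁` and `q₂`.
  have hsum : s * α + t * β = 0 := by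
    by_contra hne
    obtain ⟨z, hz, hzp⟩ := (convex_convexHull ℝ A).exists_mem_add_smul_eq hq₁ hq₂ hsα htβ
    rw [← hcombo] at hzp
    exact hp (smul_right_injective E hne hzp ▸ hz)
  have hα : α = 0 := by
    have : s * α = 0 := by linarith
    simpa [hs.ne'] using this
  simp [hα]

variable [PartialOrder E] [IsOrderedAddMonoid E] [PosSMulMono ℝ E]

theorem eq_of_le_of_mem_convexHull_insert {A : Set E} {p c : E}
    (hp : p ∉ convexHull ℝ A + Ici 0) (hc : c ∈ convexHull ℝ (insert p A)) (hcp : c ≤ p) :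
    c = p := by
  rcases eq_or_exists_eq_add_smul_sub_of_mem_convexHull_insert hc with rfl | ⟨q, hq, θ, hθ, rfl⟩
  · rfl
  rcases hθ.1.eq_or_lt with rfl | hθ
  · simp
  have hpq : 0 ≤ θ • (p - q) := by
    rw [← sub_nonneg] at hcp
    convert hcp using 1
    module
  exact absurd ⟨q, hq, p - q, nonneg_of_smul_nonneg_of_pos_left hpq hθ, add_sub_cancel q p⟩ hp

theorem mem_extremePoints_add_Ici {K : Set E} {p : E} (hK : Convex ℝ K)
    (hp : p ∈ K.extremePoints ℝ) (hmin : ∀ c ∈ K, c ≤ p → c = p) :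
    p ∈ (K + Ici 0).extremePoints ℝ := by
  refine mem_extremePoints_iff_left.2 ⟨⟨p, hp.1, 0, le_rfl, add_zero p⟩, ?_⟩
  rintro _ ⟨k₁, hk₁, v₁, hv₁, rfl⟩ _ ⟨k₂, hk₂, v₂, hv₂, rfl⟩ ⟨s, t, hs, ht, hst, hab⟩
  have hsv₁ : 0 ≤ s • v₁ := smul_nonneg hs.le hv₁
  have htv₂ : 0 ≤ t • v₂ := smul_nonneg ht.le hv₂
  have hsplit : (s • k₁ + t • k₂) + (s • v₁ + t • v₂) = p := by
    rw [← hab]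
    module
  have hk : s • k₁ + t • k₂ = p :=
    hmin _ (hK hk₁ hk₂ hs.le ht.le hst) (hsplit ▸ le_add_of_nonneg_right (add_nonneg hsv₁ htv₂))
  rw [hk, add_eq_left, add_eq_zero_iff_of_nonneg hsv₁ htv₂] at hsplit
  have hv₁ : v₁ = 0 := by simpa [hs.ne'] using hsplit.1
  show k₁ + v₁ = p
  rw [hp.2 hk₁ hk₂ ⟨s, t, hs, ht, hst, hk⟩, hv₁, add_zero]

theorem mem_extremePoints_convexHull_insert_add_Ici {A : Set E} {p : E}
    (hp : p ∉ convexHull ℝ A + Ici 0) :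
    p ∈ (convexHull ℝ (insert p A) + Ici 0).extremePoints ℝ :=
  mem_extremePoints_add_Ici (convex_convexHull ℝ _)
    (mem_extremePoints_convexHull_insert fun h => hp ⟨p, h, 0, le_rfl, add_zero p⟩)
    fun _ hc hcp => eq_of_le_of_mem_convexHull_insert hp hc hcp

end ConvexGeometry

section NewtonPolygon

variable {m : ℕ} {X Y : Set (Fin m → ℕ)}

theorem emb_injective : Function.Injective (emb (m := m)) :=
  fun _ _ h => funext fun i => Nat.cast_injective (congrFun h i)

theorem emb_add (x y : Fin m → ℕ) : emb (x + y) = emb x + emb y :=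
  funext fun i => Nat.cast_add (x i) (y i)

theorem convexHull_range_natCast : convexHull ℝ (range ((↑) : ℕ → ℝ)) = Ici 0 := by
  refine (convexHull_min ?_ (convex_Ici (0 : ℝ))).antisymm fun t ht => ?_
  · rintro _ ⟨n, rfl⟩
    exact mem_Ici.2 (Nat.cast_nonneg n)
  · have ht' : t ∈ segment ℝ 0 (⌈t⌉₊ : ℝ) := by
      rw [segment_eq_Icc (Nat.cast_nonneg _)]
      exact ⟨ht, Nat.le_ceil t⟩
    exact segment_subset_convexHull (mem_range.2 ⟨0, Nat.cast_zero⟩) (mem_range_self ⌈t⌉₊) ht'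

theorem convexHull_range_emb : convexHull ℝ (range (emb (m := m))) = Ici 0 := by
  rw [← pi_univ_Ici]
  change convexHull ℝ (range (Pi.map fun _ => ((↑) : ℕ → ℝ))) = _
  rw [range_piMap, convexHull_pi]
  simp only [convexHull_range_natCast, Pi.zero_apply]

theorem newton_eq_convexHull_add_Ici (X : Set (Fin m → ℕ)) :
    newton X = convexHull ℝ (emb '' X) + Ici 0 := by
  have himage : emb '' (X + univ) = emb '' X + emb '' univ :=
    image_add ((Nat.castAddMonoidHom ℝ).compLeft (Fin m))
  rw [newton, himage, convexHull_add, image_univ, convexHull_range_emb]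

theorem newton_add_Ici_subset (X : Set (Fin m → ℕ)) : newton X + Ici 0 ⊆ newton X := by
  rw [newton_eq_convexHull_add_Ici, add_assoc]
  exact add_subset_add_left (by simpa using Ici_add_Ici_subset (0 : Fin m → ℝ) 0)

theorem newton_subset_of_image_subset (h : emb '' X ⊆ newton Y) : newton X ⊆ newton Y := by
  rw [newton_eq_convexHull_add_Ici X]
  exact (add_subset_add_right (convexHull_min h (convex_convexHull ℝ _))).trans
    (newton_add_Ici_subset Y)

theorem newton_mono (h : X ⊆ Y) : newton X ⊆ newton Y :=
  convexHull_mono (image_mono (add_subset_add_right h))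

theorem emb_mem_newton_of_le {x y : Fin m → ℕ} (hy : y ∈ X) (hyx : y ≤ x) : emb x ∈ newton X :=
  subset_convexHull ℝ _ ⟨x, ⟨y, hy, x - y, mem_univ _, add_tsub_cancel_of_le hyx⟩, rfl⟩

theorem extremePoints_newton_subset (X : Set (Fin m → ℕ)) :
    (newton X).extremePoints ℝ ⊆ emb '' X := by
  intro p hp
  obtain ⟨_, ⟨y, hy, u, -, rfl⟩, rfl⟩ := extremePoints_convexHull_subset hp
  have hu : emb u = 0 := by
    refine eq_zero_of_sub_mem_of_add_mem_of_mem_extremePoints hp ?_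
      (newton_add_Ici_subset X ⟨_, hp.1, emb u, fun i => Nat.cast_nonneg (u i), rfl⟩)
    rw [emb_add, add_sub_cancel_right]
    exact emb_mem_newton_of_le hy le_rfl
  exact ⟨y, hy, by rw [emb_add, hu, add_zero]⟩

theorem extremePoints_newton (X : Set (Fin m → ℕ)) :
    (newton X).extremePoints ℝ = emb '' vert X := by
  refine Subset.antisymm (fun p hp => ?_) ?_
  · obtain ⟨y, hy, rfl⟩ := extremePoints_newton_subset X hp
    refine ⟨y, ⟨hy, fun hmem => ?_⟩, rfl⟩
    have hp' : emb y ∈ (newton (X \ {y})).extremePoints ℝ :=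
      inter_extremePoints_subset_extremePoints_of_subset (newton_mono sdiff_subset) ⟨hmem, hp⟩
    obtain ⟨z, hz, hzy⟩ := extremePoints_newton_subset _ hp'
    exact hz.2 (emb_injective hzy)
  · rintro _ ⟨x, ⟨hx, hxv⟩, rfl⟩
    rw [newton_eq_convexHull_add_Ici] at hxv ⊢
    rw [← insert_eq_of_mem hx, ← insert_sdiff_singleton, image_insert_eq]
    exact mem_extremePoints_convexHull_insert_add_Ici hxv

theorem vert_eq_of_newton_eq (h : newton X = newton Y) : vert X = vert Y :=
  image_injective.2 emb_injective <| by rw [← extremePoints_newton, ← extremePoints_newton, h]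

theorem newton_sdiff_singleton_of_notMem_vert {x : Fin m → ℕ} (hx : x ∈ X) (hxv : x ∉ vert X) :
    newton (X \ {x}) = newton X := by
  refine (newton_mono sdiff_subset).antisymm (newton_subset_of_image_subset ?_)
  rintro _ ⟨y, hy, rfl⟩
  by_cases hyx : y = x
  · subst hyx
    by_contra h
    exact hxv ⟨hx, h⟩
  · exact emb_mem_newton_of_le ⟨hy, hyx⟩ le_rfl

theorem exists_finset_newton_eq (X : Set (Fin m → ℕ)) :
    ∃ F : Finset (Fin m → ℕ), newton ↑F = newton X := by
  -- The minimal elements of `X`, finitely many by Dickson's lemma.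
  have hfin : {x | Minimal (· ∈ X) x}.Finite :=
    WellQuasiOrderedLE.finite_of_isAntichain (setOfPred_minimal_antichain _)
  refine ⟨hfin.toFinset, (newton_mono ?_).antisymm (newton_subset_of_image_subset ?_)⟩
  · intro x hx
    exact (hfin.mem_toFinset.1 hx).prop
  · rintro _ ⟨x, hx, rfl⟩
    obtain ⟨y, hyx, hy⟩ := exists_minimal_le_of_wellFoundedLT (· ∈ X) x hx
    exact emb_mem_newton_of_le (hfin.mem_toFinset.2 hy) hyx

theorem newton_vert (X : Set (Fin m → ℕ)) : newton (vert X) = newton X := by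
  obtain ⟨F, hF⟩ := exists_finset_newton_eq X
  obtain ⟨G, hG, hGmin⟩ :=
    exists_minimal_of_wellFoundedLT (fun G : Finset (Fin m → ℕ) => newton ↑G = newton X) ⟨F, hF⟩
  have hGv : vert (G : Set (Fin m → ℕ)) = G := by
    refine (sep_subset _ _).antisymm fun x hx => ?_
    by_contra hxv
    have hlt : G.erase x < G := Finset.erase_ssubset hx
    refine hlt.not_ge (hGmin ?_ hlt.le)
    show newton ↑(G.erase x) = newton X
    rw [Finset.coe_erase, newton_sdiff_singleton_of_notMem_vert hx hxv, hG]
  rw [← vert_eq_of_newton_eq hG, hGv, hG]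

end NewtonPolygon

theorem vert_eq_iff_newton_eq_general (m : ℕ) (X Y : Set (Fin m → ℕ)) :
    vert X = vert Y ↔ newton X = newton Y :=
  ⟨fun h => by rw [← newton_vert X, ← newton_vert Y, h], vert_eq_of_newton_eq⟩

theorem vert_eq_iff_newton_eq (m : ℕ) (hm : 1 ≤ m) (X Y : Set (Fin m → ℕ)) :
    vert X = vert Y ↔ newton X = newton Y :=
  vert_eq_iff_newton_eq_general m X Y

end
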